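/- arXiv:2109.07912 — 4 statements merged into one kernel-verified Lean document; each statement's English description precedes it below -/
import Mathlib

section
/- Uniqueness of the generalized Hukuhara difference: for nonempty compact convex sets A, B in a normed vector space, if C satisfies (A = B + C or B = A + (−1)·C) and D also satisfies this, then C = D. Moreover, if both conditions hold simultaneously for some C (i.e., A = B + C and B = A + (−1)·C), then C is a singleton. -/
open Pointwise

/-- Rådström cancellation, inclusion form: if `B + C ⊆ B + D` with `B` nonempty bounded
and `D` closed convex, then `C ⊆ D`. -/
lemma radstrom_subset {E : Type*} [NormedAddCommGroup E] [NormedSpace ℝ E]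
    {B C D : Set E} (hB : B.Nonempty) (hBb : Bornology.IsBounded B)
    (hDv : Convex ℝ D) (hDcl : IsClosed D) (h : B + C ⊆ B + D) : C ⊆ D := by
  obtain ⟨M, hM⟩ := hBb.exists_norm_le
  intro c hc
  have key : ∀ b : B, ∃ b' : B, ∃ d : E, d ∈ D ∧ (b : E) + c = (b' : E) + d := by
    rintro ⟨b, hb⟩
    have : b + c ∈ B + D := h (Set.add_mem_add hb hc)
    obtain ⟨b', hb', d, hd, hbd⟩ := this
    exact ⟨⟨b', hb'⟩, d, hd, hbd.symm⟩
  choose φ δ hδD hφδ using key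
  obtain ⟨b₀, hb₀⟩ := hB
  set bs : ℕ → B := fun n => φ^[n] ⟨b₀, hb₀⟩ with hbs
  have hstep : ∀ n, bs (n + 1) = φ (bs n) := by
    intro n
    simp [hbs, Function.iterate_succ_apply']
  have hkey : ∀ n : ℕ, b₀ + (n : ℝ) • c
      = (bs n : E) + ∑ i ∈ Finset.range n, δ (bs i) := by
    intro n
    induction n with
    | zero => simp [hbs]
    | succ n ih =>
      have : ((n : ℝ) + 1) • c = (n : ℝ) • c + c := by
        rw [add_smul, one_smul]
      rw [Nat.cast_succ, this, ← add_assoc, ih, Finset.sum_range_succ, hstep n]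
      have heq := hφδ (bs n)
      calc (bs n : E) + ∑ i ∈ Finset.range n, δ (bs i) + c
          = ((bs n : E) + c) + ∑ i ∈ Finset.range n, δ (bs i) := by abel
        _ = ((φ (bs n) : E) + δ (bs n)) + ∑ i ∈ Finset.range n, δ (bs i) := by rw [heq]
        _ = (φ (bs n) : E) + (∑ i ∈ Finset.range n, δ (bs i) + δ (bs n)) := by abel
  -- averaged sequence
  set s : ℕ → E := fun n => (n : ℝ)⁻¹ • ∑ i ∈ Finset.range n, δ (bs i) with hs
  have hsD : ∀ n : ℕ, 1 ≤ n → s n ∈ D := by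
    intro n hn
    have hn' : (0 : ℝ) < (n : ℝ) := by exact_mod_cast hn
    have : s n = ∑ i ∈ Finset.range n, (n : ℝ)⁻¹ • δ (bs i) := by
      rw [hs]; simp [Finset.smul_sum]
    rw [this]
    refine hDv.sum_mem (fun i _ => by positivity) ?_ (fun i _ => hδD (bs i))
    simp [Finset.sum_const, hn'.ne']
  have hdiff : ∀ n : ℕ, 1 ≤ n → ‖s n - c‖ ≤ 2 * M / n := by
    intro n hn
    have hn' : (0 : ℝ) < (n : ℝ) := by exact_mod_cast hn
    have h1 : (n : ℝ) • c = (bs n : E) - b₀ + ∑ i ∈ Finset.range n, δ (bs i) := by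
      apply add_left_cancel (a := b₀)
      rw [hkey n]; abel
    have h2 : c = (n : ℝ)⁻¹ • ((bs n : E) - b₀) + s n := by
      have := congrArg (fun x => (n : ℝ)⁻¹ • x) h1
      simpa [smul_smul, inv_mul_cancel₀ hn'.ne', smul_add, hs] using this
    have h3 : s n - c = -((n : ℝ)⁻¹ • ((bs n : E) - b₀)) := by
      rw [h2]; abel
    rw [h3, norm_neg, norm_smul, norm_inv, Real.norm_natCast]
    rw [div_eq_mul_inv, mul_comm (2 * M)]
    gcongr
    calc ‖(bs n : E) - b₀‖ ≤ ‖(bs n : E)‖ + ‖b₀‖ := norm_sub_le _ _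
      _ ≤ M + M := add_le_add (hM _ (bs n).2) (hM _ hb₀)
      _ = 2 * M := by ring
  have htend : Filter.Tendsto s Filter.atTop (nhds c) := by
    have h0 : Filter.Tendsto (fun n : ℕ => 2 * M / (n : ℝ)) Filter.atTop (nhds 0) :=
      tendsto_const_div_atTop_nhds_zero_nat (2 * M)
    have : Filter.Tendsto (fun n => s n - c) Filter.atTop (nhds 0) := by
      apply squeeze_zero_norm' _ h0
      filter_upwards [Filter.eventually_ge_atTop 1] with n hn
      exact hdiff n hn
    simpa using this.add (tendsto_const_nhds (x := c))
  exact hDcl.mem_of_tendsto htend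
    (Filter.eventually_atTop.2 ⟨1, fun n hn => hsD n hn⟩)

/-- Rådström cancellation: `B + C = B + D` implies `C = D`. -/
lemma radstrom_cancel {E : Type*} [NormedAddCommGroup E] [NormedSpace ℝ E]
    {B C D : Set E} (hB : B.Nonempty) (hBb : Bornology.IsBounded B)
    (hCv : Convex ℝ C) (hCcl : IsClosed C)
    (hDv : Convex ℝ D) (hDcl : IsClosed D) (h : B + C = B + D) : C = D :=
  le_antisymm (radstrom_subset hB hBb hDv hDcl h.le)
    (radstrom_subset hB hBb hCv hCcl h.ge)

/-- If `A = A + X` for `A` nonempty bounded and `X` closed convex nonempty then `X = {0}`. -/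
lemma setAddSelfEqZero {E : Type*} [NormedAddCommGroup E] [NormedSpace ℝ E]
    {A X : Set E} (hA : A.Nonempty) (hAb : Bornology.IsBounded A)
    (hXv : Convex ℝ X) (hXcl : IsClosed X) (h : A = A + X) : X = {0} := by
  have h0 : A + X = A + {0} := by
    rw [← h]; simp
  exact radstrom_cancel hA hAb hXv hXcl (convex_singleton 0) isClosed_singleton h0

/-- Uniqueness of the generalized Hukuhara difference of nonempty compact convex sets,
and: if both defining conditions hold simultaneously then the difference is a singleton. -/
theorem gH_difference_unique {E : Type*} [NormedAddCommGroup E] [NormedSpace ℝ E]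
    (A B C D : Set E)
    (hA : A.Nonempty) (hAc : IsCompact A) (hAv : Convex ℝ A)
    (hB : B.Nonempty) (hBc : IsCompact B) (hBv : Convex ℝ B)
    (hC : C.Nonempty) (hCc : IsCompact C) (hCv : Convex ℝ C)
    (hD : D.Nonempty) (hDc : IsCompact D) (hDv : Convex ℝ D)
    (hgC : A = B + C ∨ B = A + (-C)) (hgD : A = B + D ∨ B = A + (-D)) :
    C = D ∧ ((A = B + C ∧ B = A + (-C)) → ∃ c : E, C = {c}) := by
  have hCn : IsCompact (-C) := hCc.neg
  have hDn : IsCompact (-D) := hDc.neg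
  -- helper: if X + (-Y) = {0} with X, Y nonempty then both are the same singleton
  have mixed : ∀ X Y : Set E, X.Nonempty → Y.Nonempty → X + (-Y) = {0} → X = Y := by
    intro X Y hX hY hXY
    obtain ⟨x₀, hx₀⟩ := hX
    obtain ⟨y₀, hy₀⟩ := hY
    have key : ∀ x ∈ X, ∀ y ∈ Y, x = y := by
      intro x hx y hy
      have : x + (-y) ∈ X + (-Y) := Set.add_mem_add hx (Set.neg_mem_neg.2 hy)
      rw [hXY, Set.mem_singleton_iff] at this
      have := add_neg_eq_zero.mp this
      exact this
    ext z
    constructor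
    · intro hz
      have h1 : z = y₀ := key z hz y₀ hy₀
      rwa [h1]
    · intro hz
      have h1 : x₀ = z := key x₀ hx₀ z hz
      rwa [← h1]
  have hCD : C = D := by
    rcases hgC with h1 | h1 <;> rcases hgD with h2 | h2
    · -- A = B + C, A = B + D
      exact radstrom_cancel hB hBc.isBounded hCv hCc.isClosed hDv hDc.isClosed
        (h1 ▸ h2)
    · -- A = B + C, B = A + (-D)
      have : A = A + (C + (-D)) := by
        calc A = B + C := h1
          _ = (A + (-D)) + C := by rw [← h2]
          _ = A + (C + (-D)) := by rw [add_assoc, add_comm (-D) C]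
      have hz : C + (-D) = {0} :=
        setAddSelfEqZero hA hAc.isBounded (hCv.add hDv.neg)
          (hCc.add hDn).isClosed this
      exact mixed C D hC hD hz
    · -- B = A + (-C), A = B + D
      have : A = A + (D + (-C)) := by
        calc A = B + D := h2
          _ = (A + (-C)) + D := by rw [← h1]
          _ = A + (D + (-C)) := by rw [add_assoc, add_comm (-C) D]
      have hz : D + (-C) = {0} :=
        setAddSelfEqZero hA hAc.isBounded (hDv.add hCv.neg)
          (hDc.add hCn).isClosed this
      exact (mixed D C hD hC hz).symm
    · -- B = A + (-C), B = A + (-D)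
      have := radstrom_cancel hA hAc.isBounded hCv.neg hCn.isClosed hDv.neg hDn.isClosed
        (h1 ▸ h2)
      have := congrArg (fun s : Set E => -s) this
      simpa using this
  refine ⟨hCD, ?_⟩
  rintro ⟨h1, h2⟩
  have : A = A + (C + (-C)) := by
    calc A = B + C := h1
      _ = (A + (-C)) + C := by rw [← h2]
      _ = A + (C + (-C)) := by rw [add_assoc, add_comm (-C) C]
  have hz : C + (-C) = {0} :=
    setAddSelfEqZero hA hAc.isBounded (hCv.add hCv.neg)
      (hCc.add hCn).isClosed this
  obtain ⟨c₀, hc₀⟩ := hC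
  refine ⟨c₀, ?_⟩
  ext z
  simp only [Set.mem_singleton_iff]
  constructor
  · intro hz'
    have : z + (-c₀) ∈ C + (-C) := Set.add_mem_add hz' (Set.neg_mem_neg.2 hc₀)
    rw [hz, Set.mem_singleton_iff] at this
    exact add_neg_eq_zero.mp this
  · rintro rfl; exact hc₀
end

section
/- For multidimensional boxes A = ∏ᵢ [aᵢ⁻, aᵢ⁺] and B = ∏ᵢ [bᵢ⁻, bᵢ⁺] in ℝⁿ, the gH-difference A ⊖_g B exists if and only if either (i) aᵢ⁻ − bᵢ⁻ ≤ aᵢ⁺ − bᵢ⁺ for all i = 1,…,n, or (ii) aᵢ⁻ − bᵢ⁻ ≥ aᵢ⁺ − bᵢ⁺ for all i; and in these cases A ⊖_g B = ∏ᵢ ([aᵢ⁻, aᵢ⁺] ⊖_g [bᵢ⁻, bᵢ⁺]). -/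
/-!
A box is the order interval `Icc a b` in `Fin n → ℝ`. If `[a₁, a₂] = [b₁, b₂] + C`, translating
the endpoints `b₁`, `b₂` by any `c ∈ C` shows `a₁ - b₁ ≤ c ≤ a₂ - b₂`; conversely, coordinatewise
`[b₁, b₂] + [a₁ - b₁, a₂ - b₂] = [a₁, a₂]`. Case (ii) is case (i) with `A` and `B` exchanged.
-/

open Set Pointwise

section Pi

variable {ι : Type*} {α : ι → Type*}

theorem Set.univ_pi_add_univ_pi [∀ i, Add (α i)] (s t : ∀ i, Set (α i)) :
    univ.pi s + univ.pi t = univ.pi (s + t) := by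
  ext x
  constructor
  · rintro ⟨y, hy, z, hz, rfl⟩ i -
    exact add_mem_add (hy i trivial) (hz i trivial)
  · intro hx
    choose y hy z hz hyz using fun i => hx i trivial
    exact ⟨y, fun i _ => hy i, z, fun i _ => hz i, funext hyz⟩

variable [∀ i, AddCommGroup (α i)] [∀ i, LinearOrder (α i)] [∀ i, IsOrderedAddMonoid (α i)]
  {a₁ a₂ b₁ b₂ : ∀ i, α i}

theorem Pi.Icc_add_Icc (ha : a₁ ≤ a₂) (hb : b₁ ≤ b₂) :
    Icc a₁ a₂ + Icc b₁ b₂ = Icc (a₁ + b₁) (a₂ + b₂) := by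
  simp_rw [← pi_univ_Icc, univ_pi_add_univ_pi]
  exact Set.pi_congr rfl fun i _ => Set.Icc_add_Icc (ha i) (hb i)

theorem Pi.Icc_eq_Icc_add_Icc_sub (hb : b₁ ≤ b₂) (h : a₁ - b₁ ≤ a₂ - b₂) :
    Icc a₁ a₂ = Icc b₁ b₂ + Icc (a₁ - b₁) (a₂ - b₂) := by
  rw [Pi.Icc_add_Icc hb h, add_sub_cancel, add_sub_cancel]

theorem Pi.Icc_eq_Icc_add_neg_Icc_sub (ha : a₁ ≤ a₂) (h : a₂ - b₂ ≤ a₁ - b₁) :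
    Icc b₁ b₂ = Icc a₁ a₂ + -Icc (a₂ - b₂) (a₁ - b₁) := by
  rw [neg_Icc, neg_sub, neg_sub]
  exact Pi.Icc_eq_Icc_add_Icc_sub ha (by simpa only [neg_sub] using neg_le_neg h)

end Pi

section OrderedAddCommGroup

variable {α : Type*} [AddCommGroup α] [PartialOrder α] [IsOrderedAddMonoid α]
  {a₁ a₂ b₁ b₂ : α} {S : Set α}

theorem sub_le_sub_of_Icc_eq_Icc_add (hS : S.Nonempty) (hb : b₁ ≤ b₂)
    (h : Icc a₁ a₂ = Icc b₁ b₂ + S) : a₁ - b₁ ≤ a₂ - b₂ := by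
  obtain ⟨s, hs⟩ := hS
  have hlo : b₁ + s ∈ Icc a₁ a₂ := h ▸ add_mem_add (left_mem_Icc.2 hb) hs
  have hhi : b₂ + s ∈ Icc a₁ a₂ := h ▸ add_mem_add (right_mem_Icc.2 hb) hs
  calc a₁ - b₁ ≤ s := sub_le_iff_le_add'.2 hlo.1
    _ ≤ a₂ - b₂ := le_sub_iff_add_le'.2 hhi.2

theorem sub_le_sub_of_Icc_eq_Icc_add_neg (hS : S.Nonempty) (ha : a₁ ≤ a₂)
    (h : Icc b₁ b₂ = Icc a₁ a₂ + -S) : a₂ - b₂ ≤ a₁ - b₁ := by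
  have := neg_le_neg (sub_le_sub_of_Icc_eq_Icc_add hS.neg ha h)
  simpa only [neg_sub] using this

end OrderedAddCommGroup

/-- For boxes in ℝⁿ, the gH-difference exists iff the endpoint differences are
coherently ordered in every coordinate, and then it is the box of coordinatewise
gH-differences. -/
theorem gH_difference_boxes {n : ℕ} (a₁ a₂ b₁ b₂ : Fin n → ℝ)
    (ha : ∀ i, a₁ i ≤ a₂ i) (hb : ∀ i, b₁ i ≤ b₂ i) :
    ((∃ C : Set (Fin n → ℝ), C.Nonempty ∧ IsCompact C ∧ Convex ℝ C ∧
        (Set.univ.pi (fun i => Set.Icc (a₁ i) (a₂ i)) =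
            Set.univ.pi (fun i => Set.Icc (b₁ i) (b₂ i)) + C ∨
          Set.univ.pi (fun i => Set.Icc (b₁ i) (b₂ i)) =
            Set.univ.pi (fun i => Set.Icc (a₁ i) (a₂ i)) + (-C))) ↔
      ((∀ i, a₁ i - b₁ i ≤ a₂ i - b₂ i) ∨ (∀ i, a₂ i - b₂ i ≤ a₁ i - b₁ i))) ∧
    ((∀ i, a₁ i - b₁ i ≤ a₂ i - b₂ i) →
      Set.univ.pi (fun i => Set.Icc (a₁ i) (a₂ i)) =
        Set.univ.pi (fun i => Set.Icc (b₁ i) (b₂ i)) +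
          Set.univ.pi (fun i => Set.Icc (a₁ i - b₁ i) (a₂ i - b₂ i))) ∧
    ((∀ i, a₂ i - b₂ i ≤ a₁ i - b₁ i) →
      Set.univ.pi (fun i => Set.Icc (b₁ i) (b₂ i)) =
        Set.univ.pi (fun i => Set.Icc (a₁ i) (a₂ i)) +
          (-(Set.univ.pi (fun i => Set.Icc (a₂ i - b₂ i) (a₁ i - b₁ i))))) := by
  simp only [← Pi.sub_apply, pi_univ_Icc, ← Pi.le_def]
  refine ⟨⟨?_, ?_⟩, Pi.Icc_eq_Icc_add_Icc_sub hb, Pi.Icc_eq_Icc_add_neg_Icc_sub ha⟩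
  · rintro ⟨C, hC, -, -, h | h⟩
    · exact .inl (sub_le_sub_of_Icc_eq_Icc_add hC hb h)
    · exact .inr (sub_le_sub_of_Icc_eq_Icc_add_neg hC ha h)
  · rintro (h | h)
    · exact ⟨_, nonempty_Icc.2 h, isCompact_Icc, convex_Icc _ _,
        .inl (Pi.Icc_eq_Icc_add_Icc_sub hb h)⟩
    · exact ⟨_, nonempty_Icc.2 h, isCompact_Icc, convex_Icc _ _,
        .inr (Pi.Icc_eq_Icc_add_neg_Icc_sub ha h)⟩
end

section
/- Let A, B be nonempty compact convex subsets of ℝⁿ. If both s_A − s_B and s_B − s_A are sublinear (support) functions, then A and B are translates of each other: there exists c ∈ ℝⁿ with A = B + {c} and B = A + {−c}, so the gH-difference A ⊖_g B equals the singleton {c}. -/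
/-!
Subadditivity of `s_A - s_B` and of `s_B - s_A` means `f = s_A - s_B` is additive; being a
difference of positively homogeneous functions it is also positively homogeneous, hence linear,
so `f = ⟪·, c⟫` for some `c`. Then `s_A = s_B + ⟪·, c⟫ = s_{B + {c}}`, and since a compact convex
set is determined by its support function (Hahn–Banach), `A = B + {c}`.
-/

open Pointwise
open scoped RealInnerProductSpace

section SupportFunction

variable {E : Type*} [NormedAddCommGroup E] [InnerProductSpace ℝ E]

noncomputable def supportFunction (K : Set E) (p : E) : ℝ :=
  sSup ((fun x => ⟪p, x⟫) '' K)

variable {K C : Set E}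

theorem IsCompact.bddAbove_image_inner (hK : IsCompact K) (p : E) :
    BddAbove ((fun x => ⟪p, x⟫) '' K) :=
  (hK.image (continuous_const.inner continuous_id)).bddAbove

theorem le_supportFunction (hK : IsCompact K) {p x : E} (hx : x ∈ K) :
    ⟪p, x⟫ ≤ supportFunction K p :=
  le_csSup (hK.bddAbove_image_inner p) (Set.mem_image_of_mem _ hx)

theorem supportFunction_le (hK : K.Nonempty) {p : E} {m : ℝ} (h : ∀ x ∈ K, ⟪p, x⟫ ≤ m) :
    supportFunction K p ≤ m :=
  csSup_le (hK.image _) (Set.forall_mem_image.2 h)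

theorem supportFunction_smul_of_nonneg (K : Set E) {t : ℝ} (ht : 0 ≤ t) (p : E) :
    supportFunction K (t • p) = t * supportFunction K p := by
  have h : (fun x => ⟪t • p, x⟫) '' K = t • (fun x => ⟪p, x⟫) '' K := by
    rw [← Set.image_smul, ← Set.image_comp]
    simp only [Function.comp_def, real_inner_smul_left, smul_eq_mul]
  rw [supportFunction, h, Real.sSup_smul_of_nonneg ht, smul_eq_mul, supportFunction]

theorem supportFunction_add_singleton (hK : K.Nonempty) (hKc : IsCompact K) (p c : E) :
    supportFunction (K + {c}) p = supportFunction K p + ⟪p, c⟫ := by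
  have h : (fun x => ⟪p, x⟫) '' (K + {c}) = (fun x => ⟪p, x⟫) '' K + {⟪p, c⟫} := by
    simpa using Set.image_add (innerₛₗ ℝ p) (s := K) (t := {c})
  rw [supportFunction, h, csSup_add (hK.image _) (hKc.bddAbove_image_inner p)
    (Set.singleton_nonempty _) bddAbove_singleton, csSup_singleton, supportFunction]

theorem subset_of_supportFunction_le [CompleteSpace E] (hK : IsCompact K) (hCv : Convex ℝ C)
    (hCc : IsClosed C) (hC : C.Nonempty) (h : ∀ p, supportFunction K p ≤ supportFunction C p) :
    K ⊆ C := by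
  intro x hxK
  by_contra hxC
  obtain ⟨f, u, hfC, hfx⟩ := geometric_hahn_banach_closed_point hCv hCc hxC
  set p := (InnerProductSpace.toDual ℝ E).symm f
  have hp : ∀ y, ⟪p, y⟫ = f y := fun y => InnerProductSpace.toDual_symm_apply
  have hC_le : supportFunction C p ≤ u := supportFunction_le hC fun y hy => (hp y ▸ hfC y hy).le
  have hK_ge : f x ≤ supportFunction K p := hp x ▸ le_supportFunction hK hxK
  linarith [h p]

theorem eq_of_supportFunction_eq [CompleteSpace E] {A B : Set E}
    (hA : A.Nonempty) (hAc : IsCompact A) (hAv : Convex ℝ A)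
    (hB : B.Nonempty) (hBc : IsCompact B) (hBv : Convex ℝ B)
    (h : ∀ p, supportFunction A p = supportFunction B p) : A = B :=
  (subset_of_supportFunction_le hAc hBv hBc.isClosed hB fun p => (h p).le).antisymm
    (subset_of_supportFunction_le hBc hAv hAc.isClosed hA fun p => (h p).ge)

end SupportFunction

theorem exists_inner_eq_of_map_add_of_map_nonneg_smul {E : Type*} [NormedAddCommGroup E]
    [InnerProductSpace ℝ E] [FiniteDimensional ℝ E] {f : E → ℝ}
    (hadd : ∀ p q, f (p + q) = f p + f q) (hsmul : ∀ t : ℝ, 0 ≤ t → ∀ p, f (t • p) = t * f p) :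
    ∃ c : E, ∀ p, f p = ⟪p, c⟫ := by
  have hneg : ∀ p, f (-p) = -f p := map_neg (AddMonoidHom.mk' f hadd)
  let F : E →ₗ[ℝ] ℝ :=
    { toFun := f
      map_add' := hadd
      map_smul' := fun t p => by
        rcases le_total 0 t with ht | ht
        · exact hsmul t ht p
        · calc f (t • p) = f (-((-t) • p)) := by rw [neg_smul, neg_neg]
            _ = t * f p := by rw [hneg, hsmul _ (neg_nonneg.2 ht)]; ring }
  refine ⟨(InnerProductSpace.toDual ℝ E).symm (LinearMap.toContinuousLinearMap F), fun p => ?_⟩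
  rw [real_inner_comm, InnerProductSpace.toDual_symm_apply]
  rfl

/-- If both s_A − s_B and s_B − s_A are subadditive, then A and B are translates
of each other, so the gH-difference is a singleton. -/
theorem gH_singleton_of_both_subadditive {n : ℕ} (A B : Set (EuclideanSpace ℝ (Fin n)))
    (hA : A.Nonempty) (hAc : IsCompact A) (hAv : Convex ℝ A)
    (hB : B.Nonempty) (hBc : IsCompact B) (hBv : Convex ℝ B)
    (h1 : ∀ p q : EuclideanSpace ℝ (Fin n),
      sSup ((fun x => ⟪p + q, x⟫) '' A) - sSup ((fun x => ⟪p + q, x⟫) '' B) ≤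
        (sSup ((fun x => ⟪p, x⟫) '' A) - sSup ((fun x => ⟪p, x⟫) '' B)) +
        (sSup ((fun x => ⟪q, x⟫) '' A) - sSup ((fun x => ⟪q, x⟫) '' B)))
    (h2 : ∀ p q : EuclideanSpace ℝ (Fin n),
      sSup ((fun x => ⟪p + q, x⟫) '' B) - sSup ((fun x => ⟪p + q, x⟫) '' A) ≤
        (sSup ((fun x => ⟪p, x⟫) '' B) - sSup ((fun x => ⟪p, x⟫) '' A)) +
        (sSup ((fun x => ⟪q, x⟫) '' B) - sSup ((fun x => ⟪q, x⟫) '' A))) :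
    ∃ c : EuclideanSpace ℝ (Fin n), A = B + {c} ∧ B = A + {-c} := by
  set f := fun p => supportFunction A p - supportFunction B p
  have hadd : ∀ p q, f (p + q) = f p + f q := fun p q => by
    have := h2 p q
    simp only [f, supportFunction] at this ⊢
    linarith [h1 p q]
  have hsmul : ∀ t : ℝ, 0 ≤ t → ∀ p, f (t • p) = t * f p := fun t ht p => by
    simp only [f, supportFunction_smul_of_nonneg _ ht]
    ring
  obtain ⟨c, hc⟩ := exists_inner_eq_of_map_add_of_map_nonneg_smul hadd hsmul
  have hAB : A = B + {c} :=
    eq_of_supportFunction_eq hA hAc hAv (hB.add (Set.singleton_nonempty c))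
      (hBc.add isCompact_singleton) (hBv.add (convex_singleton c)) fun p => by
        rw [supportFunction_add_singleton hB hBc, ← hc]
        ring
  refine ⟨c, hAB, ?_⟩
  rw [hAB, add_assoc, Set.singleton_add_singleton, add_neg_cancel, Set.singleton_zero, add_zero]
end

section
/- For compact intervals A = [a⁻, a⁺] and B = [b⁻, b⁺] in ℝ with 0 ∉ B, the generalized division A ÷_g B exists: the interval C with endpoints c⁻ = min{a⁻/b⁻, a⁻/b⁺, a⁺/b⁻, a⁺/b⁺} and c⁺ = max{…} appropriately chosen satisfies A = B·C or B = A·C⁻¹, where interval multiplication is [min of products, max of products] and C⁻¹ = [1/c⁺, 1/c⁻] (assuming 0 ∉ C when needed). In particular: (1) B ÷_g B = {1}; (2) (A·B) ÷_g B = A; (3) {1} ÷_g B = B⁻¹. -/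
open Pointwise

/-- C = A ÷_g B iff A = B·C or B = A·C⁻¹ (pointwise set operations). -/
def IsGDiv (A B C : Set ℝ) : Prop :=
  A = B * C ∨ B = A * C⁻¹

/-!
Replacing `C` by `-C` turns a g-quotient of `A` by `B` into one of `-A` by `B` and of `A` by `-B`,
so it suffices to divide by `B = [b₁, b₂]` with `0 < b₁`, and `A` may be assumed to contain `0` or
to be positive. If `0 ∈ A`, then `A = B·[a₁/b₂, a₂/b₂]`. If `A` is positive and
`a₁/b₁ ≤ a₂/b₂`, then `A = B·[a₁/b₁, a₂/b₂]`; otherwise the same recipe with `A` and `B` swapped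
gives `B = A·[b₁/a₁, b₂/a₂] = A·C⁻¹` for `C = [a₂/b₂, a₁/b₁]`. Products of intervals are computed
by connectedness: `B·C` is the continuous image of `B × C`, hence an interval.
-/

namespace IsGDiv

variable {A B C : Set ℝ}

theorem neg_left (h : IsGDiv A B C) : IsGDiv (-A) B (-C) := by
  rcases h with h | h
  · exact Or.inl (by rw [h, mul_neg])
  · exact Or.inr (by rw [h, inv_neg, neg_mul_neg])

theorem neg_right (h : IsGDiv A B C) : IsGDiv A (-B) (-C) := by
  rcases h with h | h
  · exact Or.inl (by rw [h, neg_mul_neg])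
  · exact Or.inr (by rw [h, inv_neg, mul_neg])

end IsGDiv

def HasIccGDiv (A B : Set ℝ) : Prop :=
  ∃ c₁ c₂ : ℝ, c₁ ≤ c₂ ∧ IsGDiv A B (Set.Icc c₁ c₂)

namespace HasIccGDiv

variable {A B : Set ℝ}

theorem neg_left : HasIccGDiv A B → HasIccGDiv (-A) B := by
  rintro ⟨c₁, c₂, hc, h⟩
  exact ⟨-c₂, -c₁, neg_le_neg hc, Set.neg_Icc c₁ c₂ ▸ h.neg_left⟩

theorem neg_right : HasIccGDiv A B → HasIccGDiv A (-B) := by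
  rintro ⟨c₁, c₂, hc, h⟩
  exact ⟨-c₂, -c₁, neg_le_neg hc, Set.neg_Icc c₁ c₂ ▸ h.neg_right⟩

end HasIccGDiv

section IntervalArithmetic

variable {b₁ b₂ c₁ c₂ : ℝ}

theorem mul_mem_uIcc_of_mem_Icc {y : ℝ} (hy : y ∈ Set.Icc b₁ b₂) (c : ℝ) :
    y * c ∈ Set.uIcc (b₁ * c) (b₂ * c) :=
  Set.image_mul_const_uIcc c b₁ b₂ ▸ Set.mem_image_of_mem _ (Set.Icc_subset_uIcc hy)

theorem Icc_mul_Icc_of_nonneg_left (hb₁ : 0 ≤ b₁) (hb : b₁ ≤ b₂) (hc : c₁ ≤ c₂) :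
    Set.Icc b₁ b₂ * Set.Icc c₁ c₂ =
      Set.Icc (min (b₁ * c₁) (b₂ * c₁)) (max (b₁ * c₂) (b₂ * c₂)) := by
  apply subset_antisymm
  · rintro _ ⟨y, hy, z, ⟨hz₁, hz₂⟩, rfl⟩
    have hy₀ : 0 ≤ y := hb₁.trans hy.1
    exact ⟨(mul_mem_uIcc_of_mem_Icc hy c₁).1.trans (mul_le_mul_of_nonneg_left hz₁ hy₀),
      (mul_le_mul_of_nonneg_left hz₂ hy₀).trans (mul_mem_uIcc_of_mem_Icc hy c₂).2⟩
  · have hconn : IsPreconnected (Set.Icc b₁ b₂ * Set.Icc c₁ c₂) := by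
      rw [← Set.image_mul_prod]
      exact (isPreconnected_Icc.prod isPreconnected_Icc).image _ (by fun_prop)
    have hb₁' := Set.left_mem_Icc.2 hb
    have hb₂' := Set.right_mem_Icc.2 hb
    apply hconn.Icc_subset
    · rcases min_choice (b₁ * c₁) (b₂ * c₁) with h | h <;> rw [h]
      exacts [Set.mul_mem_mul hb₁' (Set.left_mem_Icc.2 hc),
        Set.mul_mem_mul hb₂' (Set.left_mem_Icc.2 hc)]
    · rcases max_choice (b₁ * c₂) (b₂ * c₂) with h | h <;> rw [h]
      exacts [Set.mul_mem_mul hb₁' (Set.right_mem_Icc.2 hc),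
        Set.mul_mem_mul hb₂' (Set.right_mem_Icc.2 hc)]

theorem Icc_mul_Icc_of_nonneg (hb₁ : 0 ≤ b₁) (hb : b₁ ≤ b₂) (hc₁ : 0 ≤ c₁) (hc : c₁ ≤ c₂) :
    Set.Icc b₁ b₂ * Set.Icc c₁ c₂ = Set.Icc (b₁ * c₁) (b₂ * c₂) := by
  rw [Icc_mul_Icc_of_nonneg_left hb₁ hb hc, min_eq_left (mul_le_mul_of_nonneg_right hb hc₁),
    max_eq_right (mul_le_mul_of_nonneg_right hb (hc₁.trans hc))]

theorem Icc_mul_Icc_of_nonneg_of_zero_mem (hb₁ : 0 ≤ b₁) (hb : b₁ ≤ b₂) (hc₁ : c₁ ≤ 0)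
    (hc₂ : 0 ≤ c₂) :
    Set.Icc b₁ b₂ * Set.Icc c₁ c₂ = Set.Icc (b₂ * c₁) (b₂ * c₂) := by
  rw [Icc_mul_Icc_of_nonneg_left hb₁ hb (hc₁.trans hc₂),
    min_eq_right (mul_le_mul_of_nonpos_right hb hc₁),
    max_eq_right (mul_le_mul_of_nonneg_right hb hc₂)]

theorem inv_Icc_of_pos (hc₁ : 0 < c₁) (hc : c₁ ≤ c₂) :
    (Set.Icc c₁ c₂)⁻¹ = Set.Icc c₂⁻¹ c₁⁻¹ := by
  have hc₂ : 0 < c₂ := hc₁.trans_le hc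
  ext x
  simp only [Set.mem_inv, Set.mem_Icc]
  constructor
  · rintro ⟨h₁, h₂⟩
    have hx : 0 < x := inv_pos.mp (hc₁.trans_le h₁)
    exact ⟨(inv_le_comm₀ hc₂ hx).mpr h₂, (le_inv_comm₀ hx hc₁).mpr h₁⟩
  · rintro ⟨h₁, h₂⟩
    have hx : 0 < x := (inv_pos.mpr hc₂).trans_le h₁
    exact ⟨(le_inv_comm₀ hc₁ hx).mpr h₂, (inv_le_comm₀ hx hc₂).mpr h₁⟩

end IntervalArithmetic

section Existence

variable {a₁ a₂ b₁ b₂ : ℝ}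

theorem Icc_eq_Icc_mul_Icc_div (ha₁ : 0 ≤ a₁) (hb₁ : 0 < b₁) (hb : b₁ ≤ b₂)
    (h : a₁ * b₂ ≤ a₂ * b₁) :
    Set.Icc a₁ a₂ = Set.Icc b₁ b₂ * Set.Icc (a₁ / b₁) (a₂ / b₂) := by
  have hb₂ : 0 < b₂ := hb₁.trans_le hb
  rw [Icc_mul_Icc_of_nonneg hb₁.le hb (div_nonneg ha₁ hb₁.le) ((div_le_div_iff₀ hb₁ hb₂).2 h),
    mul_div_cancel₀ a₁ hb₁.ne', mul_div_cancel₀ a₂ hb₂.ne']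

theorem hasIccGDiv_of_pos_of_pos (ha₁ : 0 < a₁) (ha : a₁ ≤ a₂) (hb₁ : 0 < b₁) (hb : b₁ ≤ b₂) :
    HasIccGDiv (Set.Icc a₁ a₂) (Set.Icc b₁ b₂) := by
  have ha₂ : 0 < a₂ := ha₁.trans_le ha
  have hb₂ : 0 < b₂ := hb₁.trans_le hb
  rcases le_total (a₁ * b₂) (a₂ * b₁) with h | h
  · exact ⟨_, _, (div_le_div_iff₀ hb₁ hb₂).2 h, Or.inl (Icc_eq_Icc_mul_Icc_div ha₁.le hb₁ hb h)⟩
  · have hc : a₂ / b₂ ≤ a₁ / b₁ := (div_le_div_iff₀ hb₂ hb₁).2 h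
    refine ⟨_, _, hc, Or.inr ?_⟩
    rw [inv_Icc_of_pos (div_pos ha₂ hb₂) hc, inv_div, inv_div]
    exact Icc_eq_Icc_mul_Icc_div hb₁.le ha₁ ha (by linarith)

theorem hasIccGDiv_of_pos (ha : a₁ ≤ a₂) (hb₁ : 0 < b₁) (hb : b₁ ≤ b₂) :
    HasIccGDiv (Set.Icc a₁ a₂) (Set.Icc b₁ b₂) := by
  have hb₂ : 0 < b₂ := hb₁.trans_le hb
  rcases lt_or_ge 0 a₁ with ha₁ | ha₁
  · exact hasIccGDiv_of_pos_of_pos ha₁ ha hb₁ hb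
  rcases le_or_gt 0 a₂ with ha₂ | ha₂
  · refine ⟨a₁ / b₂, a₂ / b₂, div_le_div_of_nonneg_right ha hb₂.le, Or.inl ?_⟩
    rw [Icc_mul_Icc_of_nonneg_of_zero_mem hb₁.le hb (div_nonpos_of_nonpos_of_nonneg ha₁ hb₂.le)
      (div_nonneg ha₂ hb₂.le), mul_div_cancel₀ a₁ hb₂.ne', mul_div_cancel₀ a₂ hb₂.ne']
  · have h := (hasIccGDiv_of_pos_of_pos (neg_pos.2 ha₂) (neg_le_neg ha) hb₁ hb).neg_left
    rwa [Set.neg_Icc, neg_neg, neg_neg] at h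

theorem hasIccGDiv_Icc_Icc (ha : a₁ ≤ a₂) (hb : b₁ ≤ b₂) (h0 : (0 : ℝ) ∉ Set.Icc b₁ b₂) :
    HasIccGDiv (Set.Icc a₁ a₂) (Set.Icc b₁ b₂) := by
  rcases lt_or_ge 0 b₁ with hb₁ | hb₁
  · exact hasIccGDiv_of_pos ha hb₁ hb
  · have hb₂ : b₂ < 0 := lt_of_not_ge fun hb₂ ↦ h0 ⟨hb₁, hb₂⟩
    have h := (hasIccGDiv_of_pos ha (neg_pos.2 hb₂) (neg_le_neg hb)).neg_right
    rwa [Set.neg_Icc, neg_neg, neg_neg] at h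

end Existence

/-- The g-division of compact intervals with 0 ∉ B exists, and:
B ÷_g B = {1}, (A·B) ÷_g B = A, {1} ÷_g B = B⁻¹. -/
theorem g_division_intervals (a₁ a₂ b₁ b₂ : ℝ) (ha : a₁ ≤ a₂) (hb : b₁ ≤ b₂)
    (h0 : (0 : ℝ) ∉ Set.Icc b₁ b₂) :
    (∃ c₁ c₂ : ℝ, c₁ ≤ c₂ ∧ IsGDiv (Set.Icc a₁ a₂) (Set.Icc b₁ b₂) (Set.Icc c₁ c₂)) ∧
    IsGDiv (Set.Icc b₁ b₂) (Set.Icc b₁ b₂) ({1} : Set ℝ) ∧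
    IsGDiv (Set.Icc a₁ a₂ * Set.Icc b₁ b₂) (Set.Icc b₁ b₂) (Set.Icc a₁ a₂) ∧
    IsGDiv ({1} : Set ℝ) (Set.Icc b₁ b₂) ((Set.Icc b₁ b₂)⁻¹) := by
  refine ⟨hasIccGDiv_Icc_Icc ha hb h0, Or.inl ?_, Or.inl (mul_comm _ _), Or.inr ?_⟩
  · rw [Set.singleton_one, mul_one]
  · rw [inv_inv, Set.singleton_one, one_mul]
end
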